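/- arXiv:2209.06688 — 5 statements merged into one kernel-verified Lean document; each statement's English description precedes it below -/
import Mathlib

section
/- Let $K$ be a field, $n \ge 1$, and let $p_a, p_b, p_c, p_1, \ldots, p_n \in K$ be pairwise distinct. Define the interior iterated Kapranov coordinates $x^{(i)}_j = (p_a - p_j)/(p_i - p_j)$ for $i \in \{1,\ldots,n\}$ and $j \in L_i$. Then this coordinate family satisfies all of the Monin–Rana equations: for all $1 \le i < j \le n$ and all $m, r \in L_i$, one has $x^{(i)}_m\,(x^{(j)}_m - x^{(j)}_i)\,x^{(j)}_r = x^{(i)}_r\,(x^{(j)}_r - x^{(j)}_i)\,x^{(j)}_m$. (This is the interior case of the inclusion $\Omega_n(\overline{M}_{0,n+3}) \subseteq \mathrm{MR}_n$.) -/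
/-- The Monin–Rana equations for a coordinate family
`x : (i : ℕ) → Fin (i+1) → K`, where `x i` gives the homogeneous coordinates
on the `ℙ^i` factor, indexed by the label set `L_i = {b, c, 1, …, i-1}`
via `b ↔ 0`, `c ↔ 1`, numeric label `j ↔ j+1`.  The equations are imposed
for `1 ≤ i < j ≤ n`; the coordinate `x^{(j)}_i` corresponds to index `i+1`
in `Fin (j+1)`. -/
def MoninRana (K : Type*) [Field K] (n : ℕ) (x : (i : ℕ) → Fin (i + 1) → K) : Prop :=
  ∀ i j : ℕ, 1 ≤ i → ∀ _hij : i < j, j ≤ n →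
    ∀ m r : Fin (i + 1),
      x i m * (x j (Fin.castLE (by omega) m) - x j ⟨i + 1, by omega⟩)
          * x j (Fin.castLE (by omega) r)
        = x i r * (x j (Fin.castLE (by omega) r) - x j ⟨i + 1, by omega⟩)
          * x j (Fin.castLE (by omega) m)

/-- Given pairwise distinct points `p 0 = p_a`, `p 1 = p_b`,
`p 2 = p_c`, `p (ℓ+2) = p_ℓ` (`1 ≤ ℓ ≤ n`) in a field `K`, the interior
iterated Kapranov coordinates `x^{(i)}_j = (p_a - p_j)/(p_i - p_j)` satisfy
all of the Monin–Rana equations. -/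
theorem interior_kapranov_satisfies_MR {K : Type*} [Field K] (n : ℕ) (hn : 1 ≤ n)
    (p : ℕ → K) (hp : ∀ s t, s < n + 3 → t < n + 3 → p s = p t → s = t) :
    MoninRana K n (fun i j => (p 0 - p ((j : ℕ) + 1)) / (p (i + 2) - p ((j : ℕ) + 1))) := by
  intro i j hi hij hjn m r
  have hm := m.isLt
  have hr := r.isLt
  have key : ∀ s t, s < n + 3 → t < n + 3 → s ≠ t → p s - p t ≠ 0 := by
    intro s t hs ht hst
    exact sub_ne_zero.mpr fun h => hst (hp s t hs ht h)
  simp only [Fin.coe_castLE, Fin.val_mk]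
  have h1 : p (i + 2) - p ((m : ℕ) + 1) ≠ 0 := key _ _ (by omega) (by omega) (by omega)
  have h2 : p (j + 2) - p ((m : ℕ) + 1) ≠ 0 := key _ _ (by omega) (by omega) (by omega)
  have h3 : p (j + 2) - p (i + 2) ≠ 0 := key _ _ (by omega) (by omega) (by omega)
  have h4 : p (i + 2) - p ((r : ℕ) + 1) ≠ 0 := key _ _ (by omega) (by omega) (by omega)
  have h5 : p (j + 2) - p ((r : ℕ) + 1) ≠ 0 := key _ _ (by omega) (by omega) (by omega)
  field_simp
  ring
end

section
/- Let $K$ be a field and $n \ge 1$. Let $(x^{(1)}, \ldots, x^{(n)})$ be a coordinate family satisfying the Monin–Rana equations, with each vector $x^{(i)}$ not identically zero. If the coordinates of $x^{(n)}$ are all nonzero and pairwise distinct (i.e. $x^{(n)}_j \ne 0$ for all $j \in L_n$ and $x^{(n)}_j \ne x^{(n)}_k$ for distinct $j, k \in L_n$), then for every $i \in \{1,\ldots,n\}$ the coordinates of $x^{(i)}$ are all nonzero and pairwise distinct. -/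
/-- If a coordinate family (each vector nonzero) satisfies
the Monin–Rana equations and the `ℙ^n` coordinates are all nonzero and
pairwise distinct, then the same holds for every `ℙ^i` factor, `1 ≤ i ≤ n`. -/
theorem MR_nonzero_distinct_propagates {K : Type*} [Field K] (n : ℕ) (hn : 1 ≤ n)
    (x : (i : ℕ) → Fin (i + 1) → K)
    (hMR : MoninRana K n x)
    (hne : ∀ i, 1 ≤ i → i ≤ n → ∃ j, x i j ≠ 0)
    (hn0 : ∀ j : Fin (n + 1), x n j ≠ 0)
    (hninj : Function.Injective (x n)) :
    ∀ i, 1 ≤ i → i ≤ n → (∀ j : Fin (i + 1), x i j ≠ 0) ∧ Function.Injective (x i) := by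
  intro i hi1 hin
  rcases eq_or_lt_of_le hin with heq | hlt
  · subst heq; exact ⟨hn0, hninj⟩
  · have hcast : i + 1 ≤ n + 1 := by omega
    have key := hMR i n hi1 hlt le_rfl
    set ι : Fin (n + 1) := ⟨i + 1, by omega⟩ with hι
    have hXne : ∀ m : Fin (i + 1), x n (Fin.castLE hcast m) ≠ 0 := fun m => hn0 _
    have hXι : x n ι ≠ 0 := hn0 _
    have hdiff : ∀ m : Fin (i + 1), x n (Fin.castLE hcast m) - x n ι ≠ 0 := by
      intro m h
      have : Fin.castLE hcast m = ι := hninj (sub_eq_zero.mp h)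
      have := congrArg Fin.val this
      simp [Fin.castLE, hι] at this
      omega
    obtain ⟨j0, hj0⟩ := hne i hi1 hin
    have hkey : ∀ m r : Fin (i + 1),
        x i m * (x n (Fin.castLE hcast m) - x n ι) * x n (Fin.castLE hcast r)
          = x i r * (x n (Fin.castLE hcast r) - x n ι) * x n (Fin.castLE hcast m) := by
      intro m r
      exact key m r
    have hnz : ∀ m : Fin (i + 1), x i m ≠ 0 := by
      intro m hm
      have h := hkey m j0
      rw [hm] at h
      exact (mul_ne_zero (mul_ne_zero hj0 (hdiff j0)) (hXne m)) (by linear_combination -h)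
    refine ⟨hnz, ?_⟩
    intro m r hmr
    have h := hkey m r
    rw [hmr] at h
    have h2 : (x n (Fin.castLE hcast m) - x n ι) * x n (Fin.castLE hcast r)
        = (x n (Fin.castLE hcast r) - x n ι) * x n (Fin.castLE hcast m) :=
      mul_left_cancel₀ (hnz r) (by linear_combination h)
    have h3 : x n ι * x n (Fin.castLE hcast m) = x n ι * x n (Fin.castLE hcast r) := by
      linear_combination h2
    have h4 : x n (Fin.castLE hcast m) = x n (Fin.castLE hcast r) := mul_left_cancel₀ hXι h3
    have h5 := hninj h4
    exact Fin.castLE_injective hcast h5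
end

section
/- Let $K$ be an infinite field and $n \ge 1$. Let $(x^{(1)}, \ldots, x^{(n)})$ be a coordinate family satisfying the Monin–Rana equations, with each vector $x^{(i)}$ not identically zero, and suppose the coordinates of $x^{(n)}$ are all nonzero and pairwise distinct. Then there exist pairwise distinct elements $p_a, p_b, p_c, p_1, \ldots, p_n \in K$ and nonzero scalars $\lambda_1, \ldots, \lambda_n \in K$ such that $x^{(i)}_j = \lambda_i \, (p_a - p_j)/(p_i - p_j)$ for every $i \in \{1,\ldots,n\}$ and every $j \in L_i$. (In other words, every point of the Monin–Rana zero locus whose $\mathbb{P}^n$ coordinates are nonzero and distinct is the image under the iterated Kapranov embedding $\Omega_n$ of a smooth curve in the interior $M_{0,n+3}$.) -/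
/-!
Write `y = x⁽ⁿ⁾`. The Monin–Rana equations with `j = n` say that for `i < n` the vector `x⁽ⁱ⁾`
is proportional to `(y_m / (y_m - y_{i+1}))_m`, which is the Kapranov coordinate vector of the
configuration `(0, y_0, …, y_n, ∞)`, and so, up to scale, is `y` itself for `i = n`. A Möbius
map moving `∞` into `K` rescales each Kapranov vector, since it multiplies a difference `s - t`
by a factor depending on `s` and `t` separately. We use `t ↦ t / (t - l)` with
`l ∉ {0, y_0, …, y_n}`, which exists because `K` is infinite; it sends `0 ↦ 0` and `∞ ↦ 1`.
-/

section KapranovCoordinates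

variable {K : Type*} [Field K]

section Moebius

variable {l s t : K}

theorem div_sub_sub_div_sub (hs : s ≠ l) (ht : t ≠ l) :
    s / (s - l) - t / (t - l) = l * (t - s) / ((s - l) * (t - l)) := by
  field_simp [sub_ne_zero.2 hs, sub_ne_zero.2 ht]
  ring

theorem injOn_div_sub (hl : l ≠ 0) : Set.InjOn (fun t : K => t / (t - l)) {t | t ≠ l} := by
  intro s hs t ht hst
  have h := div_sub_sub_div_sub (l := l) hs ht
  simp only at hst
  rw [hst, sub_self, eq_comm, div_eq_zero_iff] at h
  rcases h with h | h
  · exact (sub_eq_zero.1 ((mul_eq_zero.1 h).resolve_left hl)).symm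
  · exact absurd h (mul_ne_zero (sub_ne_zero.2 hs) (sub_ne_zero.2 ht))

theorem div_sub_ne_one (hl : l ≠ 0) (ht : t ≠ l) : t / (t - l) ≠ 1 := by
  rw [Ne, div_eq_one_iff_eq (sub_ne_zero.2 ht)]
  intro h
  exact hl (by linear_combination h)

theorem kapranov_ratio_div_sub (hs : s ≠ l) (ht : t ≠ l) :
    (0 - t / (t - l)) / (s / (s - l) - t / (t - l)) = (l - s) / l * (t / (t - s)) := by
  rw [div_sub_sub_div_sub hs ht]
  field_simp [sub_ne_zero.2 hs, sub_ne_zero.2 ht]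
  ring

theorem kapranov_ratio_div_sub_one (ht : t ≠ l) :
    (0 - t / (t - l)) / (1 - t / (t - l)) = t / l := by
  have htl : t - l ≠ 0 := sub_ne_zero.2 ht
  rw [one_sub_div htl, zero_sub, ← neg_div, div_div_div_cancel_right₀ htl, sub_sub_cancel_left,
    neg_div_neg_eq]

end Moebius

/-- The images of `0, y 0, …, y n, ∞` under `t ↦ t / (t - l)`. -/
def kapranovPoints (n : ℕ) (l : K) (y : Fin (n + 1) → K) : ℕ → K
  | 0 => 0
  | k + 1 => if h : k < n + 1 then y ⟨k, h⟩ / (y ⟨k, h⟩ - l) else 1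

section kapranovPoints

variable {n : ℕ} {l : K} {y : Fin (n + 1) → K}

@[simp]
theorem kapranovPoints_zero : kapranovPoints n l y 0 = 0 := rfl

theorem kapranovPoints_succ (j : Fin (n + 1)) :
    kapranovPoints n l y ((j : ℕ) + 1) = y j / (y j - l) := by
  simp [kapranovPoints, j.isLt]

theorem kapranovPoints_add_two : kapranovPoints n l y (n + 2) = 1 := by
  simp [kapranovPoints]

theorem kapranovPoints_injOn (hl : l ≠ 0) (hy0 : ∀ j, y j ≠ 0) (hyl : ∀ j, y j ≠ l)
    (hy : Function.Injective y) : Set.InjOn (kapranovPoints n l y) (Set.Iio (n + 3)) := by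
  have hφ0 (j) : y j / (y j - l) ≠ 0 := div_ne_zero (hy0 j) (sub_ne_zero.2 (hyl j))
  have hφ1 (j) : y j / (y j - l) ≠ 1 := div_sub_ne_one hl (hyl j)
  have hsplit : ∀ s < n + 3, s = 0 ∨ (∃ j : Fin (n + 1), s = j + 1) ∨ s = n + 2 := by
    rintro (_ | k) hk
    · exact .inl rfl
    · obtain hk | rfl := Nat.lt_succ_iff_lt_or_eq.1 (Nat.succ_lt_succ_iff.1 hk)
      · exact .inr (.inl ⟨⟨k, hk⟩, rfl⟩)
      · exact .inr (.inr rfl)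
  intro s hs t ht hst
  rcases hsplit s hs with rfl | ⟨i, rfl⟩ | rfl <;> rcases hsplit t ht with rfl | ⟨j, rfl⟩ | rfl <;>
    simp only [kapranovPoints_zero, kapranovPoints_succ, kapranovPoints_add_two] at hst
  · rfl
  · exact absurd hst.symm (hφ0 j)
  · exact absurd hst zero_ne_one
  · exact absurd hst (hφ0 i)
  · rw [hy (injOn_div_sub hl (hyl i) (hyl j) hst)]
  · exact absurd hst (hφ1 i)
  · exact absurd hst one_ne_zero
  · exact absurd hst.symm (hφ1 j)
  · rfl

theorem kapranovPoints_ratio_of_lt (hyl : ∀ j, y j ≠ l) {i : ℕ} (hin : i < n) (j : Fin (i + 1)) :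
    (kapranovPoints n l y 0 - kapranovPoints n l y ((j : ℕ) + 1)) /
        (kapranovPoints n l y (i + 2) - kapranovPoints n l y ((j : ℕ) + 1)) =
      (l - y ⟨i + 1, by omega⟩) / l *
        (y (Fin.castLE (by omega) j) / (y (Fin.castLE (by omega) j) - y ⟨i + 1, by omega⟩)) := by
  have hj := kapranovPoints_succ (l := l) (y := y) (Fin.castLE (by omega) j)
  rw [Fin.val_castLE] at hj
  rw [kapranovPoints_zero, hj, kapranovPoints_succ (y := y) ⟨i + 1, by omega⟩]
  exact kapranov_ratio_div_sub (hyl _) (hyl _)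

theorem kapranovPoints_ratio_last (hyl : ∀ j, y j ≠ l) (j : Fin (n + 1)) :
    (kapranovPoints n l y 0 - kapranovPoints n l y ((j : ℕ) + 1)) /
        (kapranovPoints n l y (n + 2) - kapranovPoints n l y ((j : ℕ) + 1)) = y j / l := by
  rw [kapranovPoints_zero, kapranovPoints_succ, kapranovPoints_add_two]
  exact kapranov_ratio_div_sub_one (hyl j)

end kapranovPoints

namespace MoninRana

variable {n i : ℕ} {x : (i : ℕ) → Fin (i + 1) → K}

theorem exists_eq_mul_div_sub (hMR : MoninRana K n x) (hi : 1 ≤ i) (hin : i < n)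
    (hxi : ∃ j, x i j ≠ 0) (hy0 : x n 0 ≠ 0) (hy : Function.Injective (x n)) :
    ∃ c ≠ 0, ∀ j : Fin (i + 1), x i j = c * (x n (Fin.castLE (by omega) j) /
      (x n (Fin.castLE (by omega) j) - x n ⟨i + 1, by omega⟩)) := by
  set c := x i 0 * (x n 0 - x n ⟨i + 1, by omega⟩) / x n 0
  have hx (j : Fin (i + 1)) : x i j = c * (x n (Fin.castLE (by omega) j) /
      (x n (Fin.castLE (by omega) j) - x n ⟨i + 1, by omega⟩)) := by
    have key := hMR i n hi hin le_rfl j 0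
    rw [Fin.castLE_zero] at key
    have hjZ : x n (Fin.castLE (by omega) j) - x n ⟨i + 1, by omega⟩ ≠ 0 :=
      sub_ne_zero.2 (hy.ne (Fin.ne_of_val_ne (by simp; omega)))
    simp only [c]
    field_simp
    linear_combination key
  refine ⟨c, fun hc => ?_, hx⟩
  obtain ⟨j, hj⟩ := hxi
  exact hj (by rw [hx j, hc, zero_mul])

theorem exists_eq_mul_kapranovPoints_ratio (hMR : MoninRana K n x) (hi : 1 ≤ i) (hin : i < n)
    (hxi : ∃ j, x i j ≠ 0) (hy0 : x n 0 ≠ 0) (hy : Function.Injective (x n)) {l : K}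
    (hl : l ≠ 0) (hyl : ∀ j, x n j ≠ l) :
    ∃ μ ≠ 0, ∀ j : Fin (i + 1), x i j = μ *
      ((kapranovPoints n l (x n) 0 - kapranovPoints n l (x n) ((j : ℕ) + 1)) /
        (kapranovPoints n l (x n) (i + 2) - kapranovPoints n l (x n) ((j : ℕ) + 1))) := by
  obtain ⟨c, hc, hx⟩ := hMR.exists_eq_mul_div_sub hi hin hxi hy0 hy
  have hlZ : l - x n ⟨i + 1, by omega⟩ ≠ 0 := sub_ne_zero.2 (hyl _).symm
  refine ⟨c * (l / (l - x n ⟨i + 1, by omega⟩)), mul_ne_zero hc (div_ne_zero hl hlZ), fun j => ?_⟩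
  rw [kapranovPoints_ratio_of_lt hyl hin, hx]
  field_simp

end MoninRana

end KapranovCoordinates

theorem MR_interior_point_is_kapranov_general {K : Type*} [Field K] [Infinite K]
    (n : ℕ)
    (x : (i : ℕ) → Fin (i + 1) → K)
    (hMR : MoninRana K n x)
    (hne : ∀ i, 1 ≤ i → i ≤ n → ∃ j, x i j ≠ 0)
    (hn0 : ∀ j : Fin (n + 1), x n j ≠ 0)
    (hninj : Function.Injective (x n)) :
    ∃ p : ℕ → K, (∀ s t, s < n + 3 → t < n + 3 → p s = p t → s = t) ∧
      ∃ lam : ℕ → K, (∀ i, 1 ≤ i → i ≤ n → lam i ≠ 0) ∧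
        ∀ i, 1 ≤ i → i ≤ n → ∀ j : Fin (i + 1),
          x i j = lam i * ((p 0 - p ((j : ℕ) + 1)) / (p (i + 2) - p ((j : ℕ) + 1))) := by
  classical
  obtain ⟨l, hl⟩ := Infinite.exists_notMem_finset (insert 0 (Finset.univ.image (x n)))
  have hl0 : l ≠ 0 := fun h => hl (by simp [h])
  have hyl (j) : x n j ≠ l := fun h => hl (by simp [← h])
  set p := kapranovPoints n l (x n)
  -- `∃ μ` comes first so that `choose` yields a plain `lam : ℕ → K`.
  have hrow (i : ℕ) : ∃ μ : K, 1 ≤ i → i ≤ n → μ ≠ 0 ∧ ∀ j : Fin (i + 1),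
      x i j = μ * ((p 0 - p ((j : ℕ) + 1)) / (p (i + 2) - p ((j : ℕ) + 1))) := by
    by_cases hi : 1 ≤ i ∧ i ≤ n
    swap
    · exact ⟨1, fun h h' => absurd ⟨h, h'⟩ hi⟩
    obtain hin | rfl := hi.2.lt_or_eq
    · obtain ⟨μ, hμ, hx⟩ :=
        hMR.exists_eq_mul_kapranovPoints_ratio hi.1 hin (hne i hi.1 hi.2) (hn0 0) hninj hl0 hyl
      exact ⟨μ, fun _ _ => ⟨hμ, hx⟩⟩
    · refine ⟨l, fun _ _ => ⟨hl0, fun j => ?_⟩⟩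
      rw [kapranovPoints_ratio_last hyl, mul_div_cancel₀ _ hl0]
  choose lam hlam using hrow
  exact ⟨p, fun s t hs ht => kapranovPoints_injOn hl0 hn0 hyl hninj hs ht,
    lam, fun i hi hin => (hlam i hi hin).1, fun i hi hin => (hlam i hi hin).2⟩

/-- (Interior case of the set-theoretic main theorem.)
Over an infinite field, every coordinate family satisfying the Monin–Rana
equations whose `ℙ^n` coordinates are nonzero and pairwise distinct is,
up to nonzero scalars `λ_i` on each factor, the family of interior iterated
Kapranov coordinates of pairwise distinct points
`p 0 = p_a, p 1 = p_b, p 2 = p_c, p (ℓ+2) = p_ℓ`. -/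
theorem MR_interior_point_is_kapranov {K : Type*} [Field K] [Infinite K]
    (n : ℕ) (hn : 1 ≤ n)
    (x : (i : ℕ) → Fin (i + 1) → K)
    (hMR : MoninRana K n x)
    (hne : ∀ i, 1 ≤ i → i ≤ n → ∃ j, x i j ≠ 0)
    (hn0 : ∀ j : Fin (n + 1), x n j ≠ 0)
    (hninj : Function.Injective (x n)) :
    ∃ p : ℕ → K, (∀ s t, s < n + 3 → t < n + 3 → p s = p t → s = t) ∧
      ∃ lam : ℕ → K, (∀ i, 1 ≤ i → i ≤ n → lam i ≠ 0) ∧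
        ∀ i, 1 ≤ i → i ≤ n → ∀ j : Fin (i + 1),
          x i j = lam i * ((p 0 - p ((j : ℕ) + 1)) / (p (i + 2) - p ((j : ℕ) + 1))) :=
  MR_interior_point_is_kapranov_general n x hMR hne hn0 hninj
end

section
/- Let $n \ge 0$ and let $T$ be a stable (at-least-trivalent) tree whose leaves are bijectively labeled by $\{a, b, c, 1, \ldots, n\}$. Let $\chi$ be a coloring of the labels by $\{R, G\}$ with $\chi(a) = R$, and assume at least one label is colored $G$. If $\chi$ has the strong separation property (no $R$-type and no $G$-type bad configuration), then there exists a unique edge $e$ of $T$ such that, after deleting $e$, all leaves with $R$-colored labels lie in one connected component of $T - e$ and all leaves with $G$-colored labels lie in the other connected component. -/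
/-!
Consider the subtrees `R` and `Γ` spanned by the red and by the green leaves. Adding the numeric
leaves one at a time, leaf `i` attaches to the tree spanned by the earlier leaves at the branch
vertex `v_i`, and the absence of bad configurations says that `v_i` avoids the span of the
colour opposite to that of `i` (for a green `i`, once some earlier leaf is green).
From this one sees inductively that `R` and `Γ` stay disjoint. In a stable tree every vertex is a
leaf or has three branches, two of which end in leaves of the same colour, so `R` and `Γ`
partition the vertices into two subtrees. Such a partition of a tree is crossed by exactly one
edge, and this edge is the unique one separating red from green.
-/

/-- `w` lies on the (unique, since we work in trees) path from `u` to `v` in `G`. -/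
def OnPath {V : Type*} (G : SimpleGraph V) (u v w : V) : Prop :=
  ∃ p : G.Walk u v, p.IsPath ∧ w ∈ p.support

/-- The degree of a vertex, as the cardinality of its neighbor set. -/
noncomputable def Ndeg {V : Type*} (G : SimpleGraph V) (v : V) : ℕ :=
  (G.neighborSet v).ncard

/-- A stable (at-least-trivalent) tree: a tree with no vertex of degree 2
and at least one vertex of degree ≥ 3. -/
def IsStableTree {V : Type*} (G : SimpleGraph V) : Prop :=
  G.IsTree ∧ (∀ v, Ndeg G v ≠ 2) ∧ (∃ v, 3 ≤ Ndeg G v)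

/-- `lf` is a bijective labeling of the leaves of `G` by the label set
`{a, b, c, 1, …, m}`, encoded as `{0, 1, …, m+2}` via
`a ↔ 0`, `b ↔ 1`, `c ↔ 2`, numeric label `ℓ ↔ ℓ+2`. -/
def IsLeafLabeling {V : Type*} (G : SimpleGraph V) (m : ℕ) (lf : ℕ → V) : Prop :=
  (∀ s t, s < m + 3 → t < m + 3 → lf s = lf t → s = t) ∧
  (∀ v, Ndeg G v = 1 ↔ ∃ s, s < m + 3 ∧ lf s = v)

/-- The vertex set of the minimal subtree `S_i` of `G` spanning the leaves
labeled by `{a, b, c, 1, …, i}` (label indices `< i+3`): the union of all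
paths between these leaves. -/
def SpanSet {V : Type*} (G : SimpleGraph V) (lf : ℕ → V) (i : ℕ) : Set V :=
  {v | ∃ j k, j < i + 3 ∧ k < i + 3 ∧ OnPath G (lf j) (lf k) v}

/-- Degree of `v` within the subtree with vertex set `s`: the number of
neighbors of `v` lying in `s`. -/
noncomputable def DegIn {V : Type*} (G : SimpleGraph V) (s : Set V) (v : V) : ℕ :=
  (G.neighborSet v ∩ s).ncard

/-- `w` is the vertex `v_i`: the vertex of degree ≥ 3 in `S_i` nearest to the
leaf labeled by the numeric label `i` (label index `i+2`): every vertex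
strictly between that leaf and `w` on the path has degree ≤ 2 in `S_i`. -/
def IsBranchVertexAt {V : Type*} (G : SimpleGraph V) (lf : ℕ → V) (i : ℕ) (w : V) : Prop :=
  w ∈ SpanSet G lf i ∧ 3 ≤ DegIn G (SpanSet G lf i) w ∧
  ∀ u, OnPath G (lf (i + 2)) w u → u ≠ lf (i + 2) → u ≠ w →
    DegIn G (SpanSet G lf i) u ≤ 2

/-- "`i` separates `j` and `k` at level `i`": the vertex `v_i` lies on the
path between the leaves with label indices `j` and `k`. -/
def SeparatesAt {V : Type*} (G : SimpleGraph V) (lf : ℕ → V) (i j k : ℕ) : Prop :=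
  ∃ w, IsBranchVertexAt G lf i w ∧ OnPath G (lf j) (lf k) w

/-- An `R`-type bad configuration for the green/red coloring `χ`
(`χ s` means label index `s` is colored `G`reen): indices `i ∈ {1,…,m}` and
distinct `j, k ∈ L_i` (label indices in `[1, i+1]`) with `j, k` green, the
numeric label `i` (label index `i+2`) red, and `i` separating `j`, `k`. -/
def RBad {V : Type*} (G : SimpleGraph V) (lf : ℕ → V) (m : ℕ) (χ : ℕ → Prop) : Prop :=
  ∃ i j k, 1 ≤ i ∧ i ≤ m ∧ 1 ≤ j ∧ j ≤ i + 1 ∧ 1 ≤ k ∧ k ≤ i + 1 ∧ j ≠ k ∧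
    χ j ∧ χ k ∧ ¬ χ (i + 2) ∧ SeparatesAt G lf i j k

/-- A `G`-type bad configuration: `i` and `k` green, `j` red, and `i`
separating `a` (label index `0`) and `j`. -/
def GBad {V : Type*} (G : SimpleGraph V) (lf : ℕ → V) (m : ℕ) (χ : ℕ → Prop) : Prop :=
  ∃ i j k, 1 ≤ i ∧ i ≤ m ∧ 1 ≤ j ∧ j ≤ i + 1 ∧ 1 ≤ k ∧ k ≤ i + 1 ∧ j ≠ k ∧
    χ (i + 2) ∧ χ k ∧ ¬ χ j ∧ SeparatesAt G lf i 0 j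

/-- The strong separation property: no bad configuration of either type. -/
def StrongSep {V : Type*} (G : SimpleGraph V) (lf : ℕ → V) (m : ℕ) (χ : ℕ → Prop) : Prop :=
  ¬ RBad G lf m χ ∧ ¬ GBad G lf m χ

open SimpleGraph Walk

namespace SimpleGraph.IsTree

variable {V : Type*} {G : SimpleGraph V} (hT : G.IsTree)

noncomputable def path (u v : V) : G.Walk u v :=
  (hT.existsUnique_path u v).exists.choose

lemma isPath_path (u v : V) : (hT.path u v).IsPath :=
  (hT.existsUnique_path u v).exists.choose_spec

lemma eq_path {u v : V} {p : G.Walk u v} (hp : p.IsPath) : p = hT.path u v :=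
  (hT.existsUnique_path u v).unique hp (hT.isPath_path u v)

lemma path_self (u : V) : hT.path u u = nil :=
  (hT.eq_path IsPath.nil).symm

lemma mem_support_path_self {u w : V} : w ∈ (hT.path u u).support ↔ w = u := by
  simp [path_self]

lemma path_adj {u v : V} (h : G.Adj u v) : hT.path u v = cons h nil :=
  (hT.eq_path (IsPath.nil.cons (by simpa using h.ne))).symm

lemma path_reverse (u v : V) : (hT.path u v).reverse = hT.path v u :=
  hT.eq_path (hT.isPath_path u v).reverse

lemma mem_support_path_comm {u v w : V} :
    w ∈ (hT.path u v).support ↔ w ∈ (hT.path v u).support := by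
  rw [← hT.path_reverse u v, support_reverse, List.mem_reverse]

lemma mem_edges_path_comm {u v : V} {e : Sym2 V} :
    e ∈ (hT.path u v).edges ↔ e ∈ (hT.path v u).edges := by
  rw [← hT.path_reverse u v, edges_reverse, List.mem_reverse]

lemma path_eq_cons_of_notMem {u z v : V} (h : G.Adj u z) (hu : u ∉ (hT.path z v).support) :
    hT.path u v = cons h (hT.path z v) :=
  (hT.eq_path ((hT.isPath_path z v).cons hu)).symm

lemma path_eq_append {u v w : V} (h : w ∈ (hT.path u v).support) :
    hT.path u v = (hT.path u w).append (hT.path w v) := by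
  classical
  conv_lhs => rw [← take_spec (hT.path u v) h]
  rw [hT.eq_path ((hT.isPath_path u v).takeUntil h), hT.eq_path ((hT.isPath_path u v).dropUntil h)]

lemma path_eq_append_of_inter {u v w : V}
    (h : ∀ z ∈ (hT.path u w).support, z ∈ (hT.path w v).support → z = w) :
    hT.path u v = (hT.path u w).append (hT.path w v) := by
  refine (hT.eq_path ?_).symm
  have hw := (hT.isPath_path w v).support_nodup
  rw [← cons_tail_support (hT.path w v), List.nodup_cons] at hw
  rw [isPath_def, support_append, List.nodup_append]
  refine ⟨(hT.isPath_path u w).support_nodup, hw.2, fun a ha b hb hab => ?_⟩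
  subst hab
  rw [h a ha (List.mem_of_mem_tail hb)] at hb
  exact hw.1 hb

lemma mem_support_path_of_mem {u v w z : V} (h : w ∈ (hT.path u v).support)
    (hz : z ∈ (hT.path u v).support) :
    z ∈ (hT.path u w).support ∨ z ∈ (hT.path w v).support := by
  rwa [hT.path_eq_append h, mem_support_append_iff] at hz

lemma support_path_subset_left {u v w : V} (h : w ∈ (hT.path u v).support) :
    (hT.path u w).support ⊆ (hT.path u v).support := by
  rw [hT.path_eq_append h]; exact support_subset_support_append_left _ _

lemma support_path_subset_right {u v w : V} (h : w ∈ (hT.path u v).support) :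
    (hT.path w v).support ⊆ (hT.path u v).support := by
  rw [hT.path_eq_append h]; exact support_subset_support_append_right _ _

lemma edges_path_subset_left {u v w : V} (h : w ∈ (hT.path u v).support) :
    (hT.path u w).edges ⊆ (hT.path u v).edges := by
  rw [hT.path_eq_append h, edges_append]; exact List.subset_append_left _ _

lemma support_path_subset {u v : V} (W : G.Walk u v) : (hT.path u v).support ⊆ W.support := by
  classical
  rw [← hT.eq_path W.bypass_isPath]; exact W.support_bypass_subset_support

lemma edges_path_subset {u v : V} (W : G.Walk u v) : (hT.path u v).edges ⊆ W.edges := by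
  classical
  rw [← hT.eq_path W.bypass_isPath]; exact W.edges_bypass_subset_edges

lemma eq_of_mem_support_path_left_right {u v w z : V} (h : w ∈ (hT.path u v).support)
    (h₁ : z ∈ (hT.path u w).support) (h₂ : z ∈ (hT.path w v).support) : z = w := by
  have hp := hT.isPath_path u v
  rw [hT.path_eq_append h, isPath_def, support_append, List.nodup_append] at hp
  rw [← cons_tail_support (hT.path w v), List.mem_cons] at h₂
  exact h₂.resolve_right fun h₂ => hp.2.2 z h₁ z h₂ rfl

lemma eq_of_mem_support_path_of_mem {u v w : V} (h₁ : w ∈ (hT.path u v).support)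
    (h₂ : v ∈ (hT.path u w).support) : w = v :=
  hT.eq_of_mem_support_path_left_right h₂ h₁ (end_mem_support _)

lemma mem_support_path_or_mem {x y w : V} (h : w ∈ (hT.path x y).support) (z : V) :
    w ∈ (hT.path z x).support ∨ w ∈ (hT.path z y).support := by
  have := hT.support_path_subset ((hT.path x z).append (hT.path z y)) h
  rw [mem_support_append_iff, hT.mem_support_path_comm] at this
  exact this

lemma mem_support_path_or_mem_of_mem {u v x y w : V} (h : w ∈ (hT.path u v).support)
    (hu : u ∈ (hT.path x y).support) :
    w ∈ (hT.path x v).support ∨ w ∈ (hT.path y v).support := by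
  rcases hT.mem_support_path_or_mem h x with h' | h'
  · rcases hT.mem_support_path_or_mem (hT.support_path_subset_left hu h') v with h'' | h'' <;>
      rw [hT.mem_support_path_comm] at h'' <;> simp [h'']
  · exact Or.inl h'

lemma path_eq_cons_of_ne {u v : V} (hne : u ≠ v) :
    ∃ (z : V) (h : G.Adj u z), hT.path u v = cons h (hT.path z v) := by
  obtain ⟨z, h, q, hq⟩ := exists_eq_cons_of_ne hne (hT.path u v)
  have hp := hT.isPath_path u v
  rw [hq] at hp
  exact ⟨z, h, by rw [hq, hT.eq_path hp.of_cons]⟩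

lemma path_eq_cons_of_adj_of_mem {u v z : V} (h : G.Adj u z) (hz : z ∈ (hT.path u v).support) :
    hT.path u v = cons h (hT.path z v) := by
  rw [hT.path_eq_append hz, hT.path_adj h]; rfl

lemma eq_of_adj_of_mem_support_path {u v z z' : V} (h : G.Adj u z) (h' : G.Adj u z')
    (hz : z ∈ (hT.path u v).support) (hz' : z' ∈ (hT.path u v).support) : z = z' := by
  have := congrArg (fun p => p.getVert 1) ((hT.path_eq_cons_of_adj_of_mem h hz).symm.trans
    (hT.path_eq_cons_of_adj_of_mem h' hz'))
  simpa using this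

lemma exists_adj_adj_of_mem_support_path {u v w : V} (h : w ∈ (hT.path u v).support)
    (hu : w ≠ u) (hv : w ≠ v) :
    ∃ d₁ d₂, d₁ ≠ d₂ ∧ G.Adj w d₁ ∧ G.Adj w d₂ ∧
      d₁ ∈ (hT.path u w).support ∧ d₂ ∈ (hT.path w v).support := by
  obtain ⟨d₁, h₁, e₁⟩ := hT.path_eq_cons_of_ne hu
  obtain ⟨d₂, h₂, e₂⟩ := hT.path_eq_cons_of_ne hv
  have m₁ : d₁ ∈ (hT.path u w).support := by
    rw [hT.mem_support_path_comm, e₁]; simp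
  have m₂ : d₂ ∈ (hT.path w v).support := by rw [e₂]; simp
  refine ⟨d₁, d₂, fun hd => h₁.ne' ?_, h₁, h₂, m₁, m₂⟩
  exact hT.eq_of_mem_support_path_left_right h m₁ (hd ▸ m₂)

lemma exists_first_mem_support_path (u : V) {v : V} {S : Set V} (hv : v ∈ S) :
    ∃ w ∈ S, w ∈ (hT.path u v).support ∧ ∀ z ∈ (hT.path u w).support, z ≠ w → z ∉ S := by
  classical
  have hex : ∃ n, ∃ w ∈ S, w ∈ (hT.path u v).support ∧ (hT.path u w).length = n :=
    ⟨_, v, hv, end_mem_support _, rfl⟩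
  obtain ⟨w, hwS, hw, hlen⟩ := Nat.find_spec hex
  refine ⟨w, hwS, hw, fun z hz hzw hzS => ?_⟩
  have hlt : (hT.path u z).length < (hT.path u w).length := by
    rw [hT.path_eq_append hz, length_append, Nat.lt_add_right_iff_pos, ← not_nil_iff_lt_length]
    exact not_nil_of_ne hzw
  have := Nat.find_min' hex ⟨z, hzS, hT.support_path_subset_left hw hz, rfl⟩
  omega

lemma reachable_deleteEdges_iff (e : Sym2 V) (u v : V) :
    (G.deleteEdges {e}).Reachable u v ↔ e ∉ (hT.path u v).edges := by
  refine ⟨fun ⟨W⟩ he => ?_, fun he => ⟨(hT.path u v).toDeleteEdges {e} fun e' h' hin => he ?_⟩⟩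
  · have hsub : ∀ e' ∈ W.edges, e' ∈ G.edgeSet := fun e' h' =>
      (edgeSet_deleteEdges {e} ▸ W.edges_subset_edgeSet h').1
    have hmem : e ∈ W.edges := by
      simpa using hT.edges_path_subset (W.transfer G hsub) he
    exact (edgeSet_deleteEdges {e} ▸ W.edges_subset_edgeSet hmem).2 rfl
  · rwa [Set.mem_singleton_iff.mp hin] at h'

lemma mem_support_path_of_adj {w z z' l l' : V} (h : G.Adj w z) (h' : G.Adj w z') (hne : z ≠ z')
    (hz : z ∈ (hT.path l w).support) (hz' : z' ∈ (hT.path l' w).support) :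
    w ∈ (hT.path l l').support := by
  rw [hT.mem_support_path_comm] at hz
  have hz'l : z' ∉ (hT.path w l).support := fun hm =>
    hne (hT.eq_of_adj_of_mem_support_path h h' hz hm)
  have hw : w ∈ (hT.path z' l).support := by
    rw [hT.path_eq_cons_of_notMem h'.symm hz'l]; simp
  rcases hT.mem_support_path_or_mem hw l' with h₁ | h₁
  · exact absurd (hT.eq_of_mem_support_path_of_mem h₁ hz') h'.ne
  · rwa [hT.mem_support_path_comm]

lemma ncard_neighborSet_inter_support_path_le_two {x y u : V}
    (hu : u ∈ (hT.path x y).support) :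
    (G.neighborSet u ∩ {w | w ∈ (hT.path x y).support}).ncard ≤ 2 := by
  have hsub : ∀ v, ({w | G.Adj u w ∧ w ∈ (hT.path u v).support} : Set V).Subsingleton :=
    fun v _ h₁ _ h₂ => hT.eq_of_adj_of_mem_support_path h₁.1 h₂.1 h₁.2 h₂.2
  calc (G.neighborSet u ∩ {w | w ∈ (hT.path x y).support}).ncard
      ≤ ({w | G.Adj u w ∧ w ∈ (hT.path u x).support} ∪
          {w | G.Adj u w ∧ w ∈ (hT.path u y).support}).ncard := by
        refine Set.ncard_le_ncard (fun w ⟨hw, hwp⟩ => ?_) ((hsub x).finite.union (hsub y).finite)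
        rcases hT.mem_support_path_of_mem hu hwp with h | h
        · exact Or.inl ⟨hw, hT.mem_support_path_comm.mp h⟩
        · exact Or.inr ⟨hw, h⟩
    _ ≤ 1 + 1 := (Set.ncard_union_le _ _).trans
        (add_le_add ((Set.ncard_le_one (hsub x).finite).mpr fun _ ha _ hb => hsub x ha hb)
          ((Set.ncard_le_one (hsub y).finite).mpr fun _ ha _ hb => hsub y ha hb))

/-- A longest path from `x` through its neighbour `z` ends in a leaf. -/
lemma exists_ndeg_eq_one_mem_support_path [Finite V] {x z : V} (hxz : G.Adj x z) :
    ∃ l, Ndeg G l = 1 ∧ z ∈ (hT.path l x).support := by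
  obtain ⟨l, hl, hmax⟩ := Set.Finite.exists_maximalFor (fun l => (hT.path l x).length)
    {l | z ∈ (hT.path l x).support} (Set.toFinite _) ⟨z, start_mem_support _⟩
  replace hl : z ∈ (hT.path l x).support := hl
  replace hmax : ∀ w, z ∈ (hT.path w x).support →
      (hT.path l x).length ≤ (hT.path w x).length → (hT.path w x).length ≤ (hT.path l x).length :=
    fun w hw => @hmax w hw
  have hlx : l ≠ x := by
    rintro rfl
    exact hxz.ne (hT.mem_support_path_self.mp hl).symm
  obtain ⟨l', hl', e⟩ := hT.path_eq_cons_of_ne hlx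
  have hnbr : G.neighborSet l ⊆ {l'} := fun w hw => by
    by_contra hwl
    refine hwl (hT.eq_of_adj_of_mem_support_path hw hl' (by_contra fun hwp => ?_) (by rw [e]; simp))
    have hw' := hT.path_eq_cons_of_notMem (G.adj_symm hw) hwp
    have := hmax w (by rw [hw']; exact List.mem_cons_of_mem _ hl) (by rw [hw', length_cons]; omega)
    rw [hw', length_cons] at this
    omega
  refine ⟨l, le_antisymm ?_ ?_, hl⟩
  · exact (Set.ncard_le_ncard hnbr (Set.toFinite _)).trans (Set.ncard_singleton l').le
  · exact (Set.ncard_pos (Set.toFinite _)).mpr ⟨l', hl'⟩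

def IsConvex (A : Set V) : Prop :=
  ∀ ⦃u⦄, u ∈ A → ∀ ⦃v⦄, v ∈ A → ∀ w ∈ (hT.path u v).support, w ∈ A

lemma reachable_deleteEdges_iff_mem_iff {A : Set V} (hA : hT.IsConvex A) (hA' : hT.IsConvex Aᶜ)
    {x y : V} (hxy : G.Adj x y) (hx : x ∈ A) (hy : y ∉ A) (u v : V) :
    (G.deleteEdges {s(x, y)}).Reachable u v ↔ (u ∈ A ↔ v ∈ A) := by
  have crossing : ∀ {u v}, u ∈ A → v ∉ A → s(x, y) ∈ (hT.path u v).edges := by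
    intro u v hu hv
    have hxv : hT.path x v = cons hxy (hT.path y v) :=
      hT.path_eq_cons_of_notMem hxy fun h => hA' hy hv x h hx
    rw [hT.path_eq_append_of_inter (w := x) fun z hz hz' => ?_, edges_append, hxv, edges_cons]
    · simp
    · by_contra hzx
      rw [hxv, support_cons, List.mem_cons] at hz'
      exact hA' hy hv z (hz'.resolve_left hzx) (hA hu hx z hz)
  rw [hT.reachable_deleteEdges_iff]
  by_cases hu : u ∈ A <;> by_cases hv : v ∈ A
  · exact iff_of_true (fun he => hy (hA hu hv y (snd_mem_support_of_mem_edges _ he)))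
      ⟨fun _ => hv, fun _ => hu⟩
  · exact iff_of_false (not_not.mpr (crossing hu hv)) (by tauto)
  · exact iff_of_false (not_not.mpr (hT.mem_edges_path_comm.mpr (crossing hv hu))) (by tauto)
  · exact iff_of_true (fun he => hA' hu hv x (fst_mem_support_of_mem_edges _ he) hx) (by tauto)

lemma eq_of_adj_of_mem_of_notMem {A : Set V} (hA : hT.IsConvex A) (hA' : hT.IsConvex Aᶜ)
    {x y u v : V} (hxy : G.Adj x y) (hx : x ∈ A) (hy : y ∉ A) (huv : G.Adj u v) (hu : u ∈ A)
    (hv : v ∉ A) : s(u, v) = s(x, y) := by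
  have := mt (hT.reachable_deleteEdges_iff_mem_iff hA hA' hxy hx hy u v).mp (by tauto)
  rw [hT.reachable_deleteEdges_iff, not_not, hT.path_adj huv] at this
  simpa [eq_comm] using this

lemma eq_of_reachable_deleteEdges {A : Set V} (hA : hT.IsConvex A) (hA' : hT.IsConvex Aᶜ)
    {x y a b : V} (hxy : G.Adj x y) (hx : x ∈ A) (hy : y ∉ A) {e : Sym2 V} (he : e ∈ G.edgeSet)
    (ha : ∀ w ∈ A, (G.deleteEdges {e}).Reachable a w)
    (hb : ∀ w ∈ Aᶜ, (G.deleteEdges {e}).Reachable b w) : e = s(x, y) := by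
  induction e using Sym2.ind with | h u v => ?_
  have huv := isBridge_iff.mp (isAcyclic_iff_forall_adj_isBridge.mp hT.isAcyclic he)
  by_cases hu : u ∈ A <;> by_cases hv : v ∈ A
  · exact absurd ((ha u hu).symm.trans (ha v hv)) huv
  · exact hT.eq_of_adj_of_mem_of_notMem hA hA' hxy hx hy he hu hv
  · rw [Sym2.eq_swap]
    exact hT.eq_of_adj_of_mem_of_notMem hA hA' hxy hx hy he.symm hv hu
  · exact absurd ((hb u hu).symm.trans (hb v hv)) huv

lemma onPath_iff {u v w : V} : OnPath G u v w ↔ w ∈ (hT.path u v).support :=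
  ⟨fun ⟨_, hp, hw⟩ => hT.eq_path hp ▸ hw, fun h => ⟨_, hT.isPath_path u v, h⟩⟩

/-- The subtree spanned by those leaves of `S_i` whose labels satisfy `P`. -/
def labelSpan (lf : ℕ → V) (i : ℕ) (P : ℕ → Prop) : Set V :=
  {v | ∃ j k, j < i + 3 ∧ k < i + 3 ∧ P j ∧ P k ∧ v ∈ (hT.path (lf j) (lf k)).support}

variable {lf : ℕ → V} {n i m : ℕ} {P Q : ℕ → Prop}

lemma spanSet_eq_labelSpan : SpanSet G lf i = hT.labelSpan lf i fun _ => True := by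
  ext v
  simp only [SpanSet, labelSpan, hT.onPath_iff, true_and, Set.mem_ofPred_eq]

lemma lf_mem_labelSpan {j : ℕ} (hj : j < i + 3) (hP : P j) : lf j ∈ hT.labelSpan lf i P :=
  ⟨j, j, hj, hj, hP, hP, start_mem_support _⟩

lemma labelSpan_mono {i' : ℕ} (hi : i ≤ i') (hPQ : ∀ s, P s → Q s) :
    hT.labelSpan lf i P ⊆ hT.labelSpan lf i' Q := fun _ ⟨j, k, hj, hk, hPj, hPk, hv⟩ =>
  ⟨j, k, by omega, by omega, hPQ j hPj, hPQ k hPk, hv⟩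

lemma labelSpan_succ_subset (hP : ¬ P (i + 3)) : hT.labelSpan lf (i + 1) P ⊆ hT.labelSpan lf i P :=
  fun _ ⟨j, k, hj, hk, hPj, hPk, hv⟩ =>
    ⟨j, k, by grind, by grind, hPj, hPk, hv⟩

lemma isConvex_labelSpan : hT.IsConvex (hT.labelSpan lf i P) := by
  rintro u ⟨j, k, hj, hk, hPj, hPk, hu⟩ v ⟨j', k', hj', hk', hPj', hPk', hv⟩ w hw
  rcases hT.mem_support_path_or_mem_of_mem hw hu with h | h <;>
  rcases hT.mem_support_path_or_mem_of_mem (hT.mem_support_path_comm.mp h) hv with h' | h'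
  exacts [⟨j', j, hj', hj, hPj', hPj, h'⟩, ⟨k', j, hk', hj, hPk', hPj, h'⟩,
    ⟨j', k, hj', hk, hPj', hPk, h'⟩, ⟨k', k, hk', hk, hPk', hPk, h'⟩]

lemma mem_labelSpan_succ {v : V} (hv : v ∈ hT.labelSpan lf (i + 1) P) :
    v ∈ hT.labelSpan lf i P ∨ v = lf (i + 3) ∨
      ∃ g, g < i + 3 ∧ P g ∧ v ∈ (hT.path (lf (i + 3)) (lf g)).support := by
  obtain ⟨j, k, hj, hk, hPj, hPk, hv⟩ := hv
  rcases Nat.lt_succ_iff_lt_or_eq.mp hj with hj | rfl <;>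
    rcases Nat.lt_succ_iff_lt_or_eq.mp hk with hk | rfl
  · exact Or.inl ⟨j, k, hj, hk, hPj, hPk, hv⟩
  · exact Or.inr (Or.inr ⟨j, hj, hPj, hT.mem_support_path_comm.mp hv⟩)
  · exact Or.inr (Or.inr ⟨k, hk, hPk, hv⟩)
  · exact Or.inr (Or.inl (hT.mem_support_path_self.mp hv))

-- An interior vertex of a path has two neighbours on it.
lemma eq_or_eq_of_lf_mem_support_path (hlf : IsLeafLabeling G n lf) {s j k : ℕ}
    (hs : s < n + 3) (hj : j < n + 3) (hk : k < n + 3)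
    (h : lf s ∈ (hT.path (lf j) (lf k)).support) : s = j ∨ s = k := by
  by_contra hc
  obtain ⟨d₁, d₂, hd, h₁, h₂, -, -⟩ := hT.exists_adj_adj_of_mem_support_path h
    (fun h => hc (Or.inl (hlf.1 s j hs hj h))) (fun h => hc (Or.inr (hlf.1 s k hs hk h)))
  have h1 : (G.neighborSet (lf s)).ncard = 1 := (hlf.2 _).2 ⟨s, hs, rfl⟩
  have h2 : 1 < (G.neighborSet (lf s)).ncard :=
    (Set.one_lt_ncard_iff (Set.finite_of_ncard_ne_zero (by rw [h1]; omega))).2 ⟨d₁, d₂, h₁, h₂, hd⟩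
  omega

lemma lf_notMem_labelSpan (hlf : IsLeafLabeling G n lf) (hm : m < n) :
    lf (m + 3) ∉ hT.labelSpan lf m P := by
  rintro ⟨j, k, hj, hk, -, -, h⟩
  rcases hT.eq_or_eq_of_lf_mem_support_path hlf (by omega) (by omega) (by omega) h with h | h <;>
    omega

/-- `q` is where the leaf `lf (m + 3)`, of numeric label `m + 1`, attaches to `S_m`; it is the
branch vertex `v_(m+1)` (`IsAttachment.isBranchVertexAt`). -/
structure IsAttachment (lf : ℕ → V) (m : ℕ) (q : V) : Prop where
  mem : q ∈ hT.labelSpan lf m fun _ => True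
  mem_support_path : ∀ z ∈ hT.labelSpan lf m (fun _ => True),
    q ∈ (hT.path (lf (m + 3)) z).support
  notMem : ∀ z ∈ (hT.path (lf (m + 3)) q).support, z ≠ q → z ∉ hT.labelSpan lf m fun _ => True

lemma exists_isAttachment : ∃ q, hT.IsAttachment lf m q := by
  obtain ⟨q, hqS, -, hfirst⟩ := hT.exists_first_mem_support_path (lf (m + 3))
    (hT.lf_mem_labelSpan (P := fun _ => True) (show 0 < m + 3 by omega) trivial)
  refine ⟨q, ⟨hqS, fun z hz => ?_, hfirst⟩⟩
  rw [hT.path_eq_append_of_inter (w := q) fun w hw hw' => ?_]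
  · exact support_subset_support_append_left _ _ (end_mem_support _)
  · by_contra hwq
    exact hfirst w hw hwq (hT.isConvex_labelSpan hqS hz w hw')

namespace IsAttachment

variable {hT} {q : V} {χ : ℕ → Prop}

lemma ne_lf (hq : hT.IsAttachment lf m q) (hlf : IsLeafLabeling G n lf) (hm : m < n) {j : ℕ}
    (hj : j < m + 3) : q ≠ lf j := by
  rintro rfl
  obtain ⟨k, hk, hkj⟩ : ∃ k, k < m + 3 ∧ k ≠ j :=
    ⟨if j = 0 then 1 else 0, by split <;> omega, by split <;> omega⟩
  rcases hT.eq_or_eq_of_lf_mem_support_path hlf (by omega) (by omega) (by omega)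
    (hq.mem_support_path _ (hT.lf_mem_labelSpan hk trivial)) with h | h <;> omega

lemma eq_of_adj (hq : hT.IsAttachment lf m q) {u z : V}
    (hu : u ∈ (hT.path (lf (m + 3)) q).support) (huq : u ≠ q) (huz : G.Adj u z)
    (hz : z ∈ hT.labelSpan lf m fun _ => True) : z = q := by
  have hqz := hq.mem_support_path z hz
  rcases hT.mem_support_path_of_mem (hT.support_path_subset_left hqz hu) hqz with h | h
  · exact absurd (hT.eq_of_mem_support_path_of_mem h hu).symm huq
  · rw [hT.path_adj huz] at h
    simp only [support_cons, support_nil, List.mem_cons, List.not_mem_nil, or_false] at h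
    exact (h.resolve_left huq.symm).symm

lemma neighborSet_inter_labelSpan_succ_subset (hq : hT.IsAttachment lf m q) {u : V}
    (hu : u ∈ (hT.path (lf (m + 3)) q).support) (huq : u ≠ q) :
    G.neighborSet u ∩ (hT.labelSpan lf (m + 1) fun _ => True) ⊆
      G.neighborSet u ∩ {w | w ∈ (hT.path (lf (m + 3)) (lf 0)).support} := by
  have hqL : q ∈ (hT.path (lf (m + 3)) (lf 0)).support :=
    hq.mem_support_path _ (hT.lf_mem_labelSpan (show 0 < m + 3 by omega) trivial)
  rintro z ⟨hz, hzS⟩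
  refine ⟨hz, ?_⟩
  have hzq : z ∈ (hT.labelSpan lf m fun _ => True) → z ∈ (hT.path (lf (m + 3)) (lf 0)).support :=
    fun h => hq.eq_of_adj hu huq hz h ▸ hqL
  rcases hT.mem_labelSpan_succ hzS with h | rfl | ⟨g, hg, -, h⟩
  · exact hzq h
  · exact start_mem_support _
  · have hgS := hT.lf_mem_labelSpan (lf := lf) hg (P := fun _ => True) trivial
    rcases hT.mem_support_path_of_mem (hq.mem_support_path _ hgS) h with h' | h'
    · exact hT.support_path_subset_left hqL h'
    · exact hzq (hT.isConvex_labelSpan hq.mem hgS z h')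

lemma isBranchVertexAt [Finite V] (hq : hT.IsAttachment lf m q) (hlf : IsLeafLabeling G n lf)
    (hm : m < n) : IsBranchVertexAt G lf (m + 1) q := by
  have hqL : q ∈ (hT.path (lf (m + 3)) (lf 0)).support :=
    hq.mem_support_path _ (hT.lf_mem_labelSpan (show 0 < m + 3 by omega) trivial)
  have hpath : ∀ v ∈ (hT.path (lf (m + 3)) (lf 0)).support,
      v ∈ hT.labelSpan lf (m + 1) fun _ => True :=
    fun v hv => ⟨m + 3, 0, by omega, by omega, trivial, trivial, hv⟩
  have hmono := hT.labelSpan_mono (lf := lf) (Nat.le_succ m) fun _ (h : True) => h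
  unfold IsBranchVertexAt
  rw [hT.spanSet_eq_labelSpan]
  refine ⟨hpath q hqL, ?_, fun u hu huL huq => ?_⟩
  · obtain ⟨j, k, hj, hk, -, -, hqjk⟩ := hq.mem
    obtain ⟨d₁, d₂, hd, h₁, h₂, hd₁, hd₂⟩ := hT.exists_adj_adj_of_mem_support_path hqjk
      (hq.ne_lf hlf hm hj) (hq.ne_lf hlf hm hk)
    have hd₁S : d₁ ∈ hT.labelSpan lf m fun _ => True :=
      ⟨j, k, hj, hk, trivial, trivial, hT.support_path_subset_left hqjk hd₁⟩
    have hd₂S : d₂ ∈ hT.labelSpan lf m fun _ => True :=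
      ⟨j, k, hj, hk, trivial, trivial, hT.support_path_subset_right hqjk hd₂⟩
    obtain ⟨x, hx, hxe⟩ := hT.path_eq_cons_of_ne fun h : q = lf (m + 3) =>
      hT.lf_notMem_labelSpan hlf hm (h ▸ hq.mem)
    have hxL : x ∈ (hT.path (lf (m + 3)) q).support := by
      rw [hT.mem_support_path_comm, hxe]; simp
    have hxS := hq.notMem x hxL hx.ne'
    refine (Set.two_lt_ncard_iff (Set.toFinite _)).2 ⟨x, d₁, d₂,
      ⟨hx, hpath x (hT.support_path_subset_left hqL hxL)⟩, ⟨h₁, hmono hd₁S⟩, ⟨h₂, hmono hd₂S⟩,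
      fun h => hxS (h ▸ hd₁S), fun h => hxS (h ▸ hd₂S), hd⟩
  · rw [hT.onPath_iff] at hu
    exact (Set.ncard_le_ncard (hq.neighborSet_inter_labelSpan_succ_subset hu huq)
      (Set.toFinite _)).trans
      (hT.ncard_neighborSet_inter_support_path_le_two (hT.support_path_subset_left hqL hu))

lemma notMem_labelSpan_of_not_gBad [Finite V] (hq : hT.IsAttachment lf m q)
    (hlf : IsLeafLabeling G n lf) (hm : m < n) (ha : ¬ χ 0) (hG : ¬ GBad G lf n χ)
    (hnew : χ (m + 3)) {g : ℕ} (hg : g < m + 3) (hχg : χ g) :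
    q ∉ hT.labelSpan lf m fun s => ¬ χ s := by
  rintro ⟨r, r', hr, hr', hχr, hχr', hqr⟩
  obtain ⟨r₀, hr₀, hχr₀, hq₀⟩ :
      ∃ r₀, r₀ < m + 3 ∧ ¬ χ r₀ ∧ q ∈ (hT.path (lf 0) (lf r₀)).support := by
    rcases hT.mem_support_path_or_mem hqr (lf 0) with h | h
    exacts [⟨r, hr, hχr, h⟩, ⟨r', hr', hχr', h⟩]
  have hr₀0 : r₀ ≠ 0 := by
    rintro rfl
    exact hq.ne_lf hlf hm (show 0 < m + 3 by omega) (hT.mem_support_path_self.mp hq₀)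
  have hg0 : g ≠ 0 := by rintro rfl; exact ha hχg
  exact hG ⟨m + 1, r₀, g, by omega, by omega, by omega, by omega, by omega, by omega,
    fun h => hχr₀ (h ▸ hχg), hnew, hχg, hχr₀, q, hq.isBranchVertexAt hlf hm, hT.onPath_iff.2 hq₀⟩

lemma notMem_labelSpan_of_not_rBad [Finite V] (hq : hT.IsAttachment lf m q)
    (hlf : IsLeafLabeling G n lf) (hm : m < n) (ha : ¬ χ 0) (hR : ¬ RBad G lf n χ)
    (hnew : ¬ χ (m + 3)) : q ∉ hT.labelSpan lf m χ := by
  rintro ⟨g, g', hg, hg', hχg, hχg', hqg⟩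
  have hgg' : g ≠ g' := by
    rintro rfl
    exact hq.ne_lf hlf hm hg (hT.mem_support_path_self.mp hqg)
  have : g ≠ 0 ∧ g' ≠ 0 := ⟨by rintro rfl; exact ha hχg, by rintro rfl; exact ha hχg'⟩
  exact hR ⟨m + 1, g, g', by omega, by omega, by omega, by omega, by omega, by omega, hgg', hχg,
    hχg', hnew, q, hq.isBranchVertexAt hlf hm, hT.onPath_iff.2 hqg⟩

end IsAttachment

variable {q : V} {χ : ℕ → Prop}

lemma notMem_labelSpan_of_mem_support_path
    (hdisj : Disjoint (hT.labelSpan lf m P) (hT.labelSpan lf m Q)) (hPQ : ∀ s, P s ∨ Q s)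
    (hq : q ∈ hT.labelSpan lf m fun _ => True) (hqQ : q ∉ hT.labelSpan lf m Q) {g : ℕ}
    (hg : g < m + 3) (hPg : P g) {v : V} (hv : v ∈ (hT.path q (lf g)).support) :
    v ∉ hT.labelSpan lf m Q := by
  intro hvQ
  have endpoint : ∀ c, c < m + 3 → q ∉ (hT.path v (lf c)).support := by
    intro c hc hqc
    rcases hPQ c with hPc | hQc
    · rcases hT.mem_support_path_or_mem hv (lf c) with h | h
      · exact hqQ (hT.eq_of_mem_support_path_of_mem (hT.mem_support_path_comm.mp hqc) h ▸ hvQ)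
      · exact Set.disjoint_left.mp hdisj ⟨c, g, hc, hg, hPc, hPg, h⟩ hvQ
    · exact hqQ (hT.isConvex_labelSpan hvQ (hT.lf_mem_labelSpan hc hQc) q hqc)
  obtain ⟨j, k, hj, hk, -, -, hqjk⟩ := hq
  rcases hT.mem_support_path_or_mem hqjk v with h | h
  exacts [endpoint j hj h, endpoint k hk h]

lemma disjoint_labelSpan_succ (hlf : IsLeafLabeling G n lf) (hm : m < n) (hPQ : ∀ s, P s ∨ Q s)
    (hQ : ¬ Q (m + 3)) (hdisj : Disjoint (hT.labelSpan lf m P) (hT.labelSpan lf m Q))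
    (hq : hT.IsAttachment lf m q) (hqQ : ∀ g, g < m + 3 → P g → q ∉ hT.labelSpan lf m Q) :
    Disjoint (hT.labelSpan lf (m + 1) P) (hT.labelSpan lf (m + 1) Q) := by
  rw [Set.disjoint_left]
  intro v hvP hvQ
  replace hvQ := hT.labelSpan_succ_subset hQ hvQ
  rcases hT.mem_labelSpan_succ hvP with h | rfl | ⟨g, hg, hPg, h⟩
  · exact Set.disjoint_left.mp hdisj h hvQ
  · exact hT.lf_notMem_labelSpan hlf hm hvQ
  · have hgS := hT.lf_mem_labelSpan (lf := lf) hg (P := fun _ => True) trivial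
    rcases hT.mem_support_path_of_mem (hq.mem_support_path _ hgS) h with h' | h'
    · by_cases hvq : v = q
      · exact hqQ g hg hPg (hvq ▸ hvQ)
      · exact hq.notMem v h' hvq (hT.labelSpan_mono le_rfl (fun _ _ => trivial) hvQ)
    · exact hT.notMem_labelSpan_of_mem_support_path hdisj hPQ hq.mem (hqQ g hg hPg) hg hPg h'
        hvQ

lemma disjoint_labelSpan_zero (hlf : IsLeafLabeling G n lf) (hPQ : ∀ s, P s → ¬ Q s) :
    Disjoint (hT.labelSpan lf 0 P) (hT.labelSpan lf 0 Q) := by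
  rw [Set.disjoint_left]
  rintro v ⟨j, k, hj, hk, hPj, hPk, hv⟩ ⟨j', k', hj', hk', hQj', hQk', hv'⟩
  have hne : ∀ {s t}, P s → Q t → s ≠ t := fun hs ht h => hPQ _ hs (h ▸ ht)
  have leaf : ∀ {s a b}, s < 3 → a < 3 → b < 3 → v = lf s →
      v ∈ (hT.path (lf a) (lf b)).support → s = a ∨ s = b := fun hs ha hb hvs h =>
    hT.eq_or_eq_of_lf_mem_support_path hlf (by omega) (by omega) (by omega) (hvs ▸ h)
  by_cases hjk : j = k
  · subst hjk
    rcases leaf hj hj' hk' (hT.mem_support_path_self.mp hv) hv' with h | h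
    exacts [hne hPj hQj' h, hne hPj hQk' h]
  by_cases hjk' : j' = k'
  · subst hjk'
    rcases leaf hj' hj hk (hT.mem_support_path_self.mp hv') hv with h | h
    exacts [hne hPj hQj' h.symm, hne hPk hQj' h.symm]
  have := hne hPj hQj'
  have := hne hPj hQk'
  have := hne hPk hQj'
  have := hne hPk hQk'
  omega

theorem disjoint_labelSpan_of_strongSep [Finite V] (hlf : IsLeafLabeling G n lf) (ha : ¬ χ 0)
    (hsep : StrongSep G lf n χ) :
    ∀ i ≤ n, Disjoint (hT.labelSpan lf i fun s => ¬ χ s) (hT.labelSpan lf i χ)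
  | 0, _ => hT.disjoint_labelSpan_zero hlf fun _ h h' => h h'
  | m + 1, hm => by
    have ih := disjoint_labelSpan_of_strongSep hlf ha hsep m (by omega)
    obtain ⟨q, hq⟩ := hT.exists_isAttachment (lf := lf) (m := m)
    by_cases hnew : χ (m + 3)
    · exact (hT.disjoint_labelSpan_succ hlf (by omega) (fun s => em (χ s)) (not_not.mpr hnew)
        ih.symm hq fun _ hg hχg =>
          hq.notMem_labelSpan_of_not_gBad hlf (by omega) ha hsep.2 hnew hg hχg).symm
    · exact hT.disjoint_labelSpan_succ hlf (by omega) (fun s => (em (χ s)).symm) hnew ih hq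
        fun _ _ _ => hq.notMem_labelSpan_of_not_rBad hlf (by omega) ha hsep.1 hnew

lemma reachable_deleteEdges_of_mem_labelSpan {e : Sym2 V}
    (hP : ∀ j k, j < i + 3 → k < i + 3 → P j → P k → (G.deleteEdges {e}).Reachable (lf j) (lf k))
    {j₀ : ℕ} (hj₀ : j₀ < i + 3) (hPj₀ : P j₀) {w : V} (hw : w ∈ hT.labelSpan lf i P) :
    (G.deleteEdges {e}).Reachable (lf j₀) w := by
  obtain ⟨j, k, hj, hk, hPj, hPk, hw⟩ := hw
  refine (hP j₀ j hj₀ hj hPj₀ hPj).trans ((hT.reachable_deleteEdges_iff e _ _).2 fun he => ?_)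
  exact (hT.reachable_deleteEdges_iff e _ _).1 (hP j k hj hk hPj hPk)
    (hT.edges_path_subset_left hw he)

lemma exists_three_leaves_of_three_le_ndeg [Finite V] {w : V} (hw : 3 ≤ Ndeg G w) :
    ∃ l₁ l₂ l₃, Ndeg G l₁ = 1 ∧ Ndeg G l₂ = 1 ∧ Ndeg G l₃ = 1 ∧ w ∈ (hT.path l₁ l₂).support ∧
      w ∈ (hT.path l₁ l₃).support ∧ w ∈ (hT.path l₂ l₃).support := by
  obtain ⟨z₁, z₂, z₃, h₁, h₂, h₃, h₁₂, h₁₃, h₂₃⟩ := (Set.two_lt_ncard_iff (Set.toFinite _)).1 hw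
  obtain ⟨l₁, hl₁, hz₁⟩ := hT.exists_ndeg_eq_one_mem_support_path h₁
  obtain ⟨l₂, hl₂, hz₂⟩ := hT.exists_ndeg_eq_one_mem_support_path h₂
  obtain ⟨l₃, hl₃, hz₃⟩ := hT.exists_ndeg_eq_one_mem_support_path h₃
  exact ⟨l₁, l₂, l₃, hl₁, hl₂, hl₃, hT.mem_support_path_of_adj h₁ h₂ h₁₂ hz₁ hz₂,
    hT.mem_support_path_of_adj h₁ h₃ h₁₃ hz₁ hz₃, hT.mem_support_path_of_adj h₂ h₃ h₂₃ hz₂ hz₃⟩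

lemma mem_labelSpan_or_mem_labelSpan [Finite V] (hno2 : ∀ v, Ndeg G v ≠ 2)
    (hdeg : ∃ v, 3 ≤ Ndeg G v) (hlf : IsLeafLabeling G n lf) (χ : ℕ → Prop) (w : V) :
    w ∈ hT.labelSpan lf n (fun s => ¬ χ s) ∨ w ∈ hT.labelSpan lf n χ := by
  have same : ∀ {s t}, s < n + 3 → t < n + 3 → (χ s ↔ χ t) → w ∈ (hT.path (lf s) (lf t)).support →
      w ∈ hT.labelSpan lf n (fun s => ¬ χ s) ∨ w ∈ hT.labelSpan lf n χ := by
    intro s t hs ht hst hw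
    by_cases h : χ s
    exacts [Or.inr ⟨s, t, hs, ht, h, hst.1 h, hw⟩, Or.inl ⟨s, t, hs, ht, h, hst.not.1 h, hw⟩]
  by_cases h1 : Ndeg G w = 1
  · obtain ⟨s, hs, rfl⟩ := (hlf.2 w).1 h1
    exact same hs hs Iff.rfl (start_mem_support _)
  have h3 : 3 ≤ Ndeg G w := by
    obtain ⟨v, hv⟩ := hdeg
    obtain ⟨x, hx⟩ :=
      Set.nonempty_of_ncard_ne_zero (s := G.neighborSet v) (by unfold Ndeg at hv; omega)
    have : Nontrivial V := ⟨v, x, hx.ne⟩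
    obtain ⟨u, hu⟩ := hT.connected.preconnected.exists_adj_of_nontrivial w
    have : Ndeg G w ≠ 0 := Set.ncard_ne_zero_of_mem hu
    have := hno2 w
    omega
  obtain ⟨l₁, l₂, l₃, hl₁, hl₂, hl₃, h₁₂, h₁₃, h₂₃⟩ := hT.exists_three_leaves_of_three_le_ndeg h3
  obtain ⟨s₁, hs₁, rfl⟩ := (hlf.2 l₁).1 hl₁
  obtain ⟨s₂, hs₂, rfl⟩ := (hlf.2 l₂).1 hl₂
  obtain ⟨s₃, hs₃, rfl⟩ := (hlf.2 l₃).1 hl₃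
  by_cases c₁₂ : χ s₁ ↔ χ s₂
  · exact same hs₁ hs₂ c₁₂ h₁₂
  by_cases c₁₃ : χ s₁ ↔ χ s₃
  · exact same hs₁ hs₃ c₁₃ h₁₃
  exact same hs₂ hs₃ (by tauto) h₂₃

end SimpleGraph.IsTree

/-- If a two-coloring (with `a` red and at least one green
label) of the leaves of a stable tree has the strong separation property,
then there is a unique edge whose deletion separates the red leaves from the
green leaves. -/
theorem strong_separation_unique_edge {V : Type*} [Fintype V]
    (n : ℕ) (G : SimpleGraph V) (hT : IsStableTree G)
    (lf : ℕ → V) (hlf : IsLeafLabeling G n lf)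
    (χ : ℕ → Prop) (ha : ¬ χ 0) (hg : ∃ s, s < n + 3 ∧ χ s)
    (hsep : StrongSep G lf n χ) :
    ∃! e : Sym2 V, e ∈ G.edgeSet ∧
      ∀ s t, s < n + 3 → t < n + 3 →
        ((G.deleteEdges {e}).Reachable (lf s) (lf t) ↔ (χ s ↔ χ t)) := by
  obtain ⟨hT, hno2, hdeg⟩ := hT
  obtain ⟨s₀, hs₀, hχs₀⟩ := hg
  set A := hT.labelSpan lf n fun s => ¬ χ s
  have hdisj := hT.disjoint_labelSpan_of_strongSep hlf ha hsep n le_rfl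
  have hAc : Aᶜ = hT.labelSpan lf n χ := Set.ext fun w =>
    ⟨(hT.mem_labelSpan_or_mem_labelSpan hno2 hdeg hlf χ w).resolve_left,
      fun h h' => Set.disjoint_left.mp hdisj h' h⟩
  have hA : hT.IsConvex A := hT.isConvex_labelSpan
  have hA' : hT.IsConvex Aᶜ := hAc ▸ hT.isConvex_labelSpan
  have hleaf : ∀ s, s < n + 3 → (lf s ∈ A ↔ ¬ χ s) := fun s hs =>
    ⟨fun h hχ => Set.disjoint_left.mp hdisj h (hT.lf_mem_labelSpan hs hχ),
      hT.lf_mem_labelSpan (P := fun s => ¬ χ s) hs⟩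
  obtain ⟨⟨⟨x, y⟩, hxy⟩, -, hx, hy⟩ := (hT.path (lf 0) (lf s₀)).exists_boundary_dart A
    ((hleaf 0 (by omega)).2 ha) (mt (hleaf s₀ hs₀).1 (not_not.2 hχs₀))
  refine ⟨s(x, y), ⟨hxy, fun s t hs ht => ?_⟩, ?_⟩
  · rw [hT.reachable_deleteEdges_iff_mem_iff hA hA' hxy hx hy, hleaf s hs, hleaf t ht, not_iff_not]
  · rintro e ⟨he, hsep'⟩
    exact hT.eq_of_reachable_deleteEdges hA hA' hxy hx hy he (a := lf 0) (b := lf s₀)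
      (fun w => hT.reachable_deleteEdges_of_mem_labelSpan
        (fun j k hj hk hj' hk' => (hsep' j k hj hk).2 (iff_of_false hj' hk')) (by omega) ha)
      (hAc ▸ fun w => hT.reachable_deleteEdges_of_mem_labelSpan
        (fun j k hj hk hj' hk' => (hsep' j k hj hk).2 (iff_of_true hj' hk')) hs₀ hχs₀)
end

section
/- Let $K$ be a field and $n \ge 2$. Let $T'$ be a stable (at-least-trivalent) tree whose leaves are bijectively labeled by $\{a, b, c, 1, \ldots, n-1\}$, and let $(x^{(1)}, \ldots, x^{(n-1)})$ be a coordinate family compatible with $T'$. Let $y : L_n \to K$ (where $L_n = \{b, c, 1, \ldots, n-1\}$) be not identically zero, and suppose the Monin–Rana equations between each $x^{(i)}$ and $y$ hold: for all $i \in \{1,\ldots,n-1\}$ and all $j, k \in L_i$, $x^{(i)}_j (y_j - y_i) y_k = x^{(i)}_k (y_k - y_i) y_j$. Color the labels by: $\chi(a) = R$; for $\ell \in L_n$, $\chi(\ell) = R$ if $y_\ell = 0$ and $\chi(\ell) = G$ if $y_\ell \ne 0$. Then this coloring of $T'$ has the strong separation property (no $R$-type and no $G$-type bad configuration). -/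
/-- A coordinate family `x` is compatible with the stable tree `G` (with leaf
labeling `lf` by `{a,b,c,1,…,m}`): `x^{(i)}_j = 0` iff `i` does not separate
`a` and `j` at level `i`, and `x^{(i)}_j = x^{(i)}_k` iff `i` does not
separate `j` and `k` at level `i`.  (Here `j : Fin (i+1)` has tree label
index `j+1`.) -/
def Compatible {V : Type*} (G : SimpleGraph V) (lf : ℕ → V) {K : Type*} [Field K]
    (m : ℕ) (x : (i : ℕ) → Fin (i + 1) → K) : Prop :=
  ∀ i, 1 ≤ i → i ≤ m → ∀ j k : Fin (i + 1),
    (x i j = 0 ↔ ¬ SeparatesAt G lf i 0 ((j : ℕ) + 1)) ∧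
    (x i j = x i k ↔ ¬ SeparatesAt G lf i ((j : ℕ) + 1) ((k : ℕ) + 1))

/-- (Lemma 3.5 of the paper.)  Let `T'` be a stable tree
labeled by `{a, b, c, 1, …, n-1}` with a compatible coordinate family
`(x^{(1)}, …, x^{(n-1)})`, and let `y : L_n → K` be a not-identically-zero
vector satisfying the Monin–Rana equations against each `x^{(i)}`.  Coloring
`a` and the labels `ℓ` with `y_ℓ = 0` red, and the labels with `y_ℓ ≠ 0`
green, yields a coloring with the strong separation property. -/
theorem zero_coloring_strong_separation {V : Type*} [Fintype V] {K : Type*} [Field K]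
    (n : ℕ) (hn : 2 ≤ n)
    (G : SimpleGraph V) (hT : IsStableTree G)
    (lf : ℕ → V) (hlf : IsLeafLabeling G (n - 1) lf)
    (x : (i : ℕ) → Fin (i + 1) → K)
    (hxne : ∀ i, 1 ≤ i → i ≤ n - 1 → ∃ j, x i j ≠ 0)
    (hcomp : Compatible G lf (n - 1) x)
    (y : Fin (n + 1) → K) (hy : ∃ t, y t ≠ 0)
    (hMR : ∀ i, 1 ≤ i → ∀ _hi : i ≤ n - 1, ∀ j k : Fin (i + 1),
      x i j * (y (Fin.castLE (by omega) j) - y ⟨i + 1, by omega⟩)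
          * y (Fin.castLE (by omega) k)
        = x i k * (y (Fin.castLE (by omega) k) - y ⟨i + 1, by omega⟩)
          * y (Fin.castLE (by omega) j)) :
    StrongSep G lf (n - 1) (fun s => ∃ t : Fin (n + 1), (t : ℕ) + 1 = s ∧ y t ≠ 0) := by
  constructor
  · rintro ⟨i, j, k, hi1, hi2, hj1, hj2, hk1, hk2, hjk, ⟨tj, htj, hyj⟩, ⟨tk, htk, hyk⟩,
      hred, hsep⟩
    have hin : i ≤ n - 1 := hi2
    have hyi : y ⟨i + 1, by omega⟩ = 0 := by
      by_contra h
      exact hred ⟨⟨i + 1, by omega⟩, rfl, h⟩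
    set j' : Fin (i + 1) := ⟨j - 1, by omega⟩ with hj'
    set k' : Fin (i + 1) := ⟨k - 1, by omega⟩ with hk'
    have hcj : (Fin.castLE (by omega) j' : Fin (n + 1)) = tj := by
      apply Fin.ext
      simp only [Fin.coe_castLE, hj']
      omega
    have hck : (Fin.castLE (by omega) k' : Fin (n + 1)) = tk := by
      apply Fin.ext
      simp only [Fin.coe_castLE, hk']
      omega
    have hMR' := hMR i hi1 hi2 j' k'
    rw [hcj, hck, hyi, sub_zero, sub_zero] at hMR'
    have heq : x i j' = x i k' := by
      have h1 : x i j' * y tj * y tk = x i k' * y tj * y tk := by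
        rw [hMR']; ring
      have h2 := mul_right_cancel₀ hyk h1
      exact mul_right_cancel₀ hyj h2
    have hc := (hcomp i hi1 hi2 j' k').2
    have hjv : (j' : ℕ) + 1 = j := by simp [hj']; omega
    have hkv : (k' : ℕ) + 1 = k := by simp [hk']; omega
    rw [hjv, hkv] at hc
    exact (hc.mp heq) hsep
  · rintro ⟨i, j, k, hi1, hi2, hj1, hj2, hk1, hk2, hjk, ⟨ti, hti, hyi⟩, ⟨tk, htk, hyk⟩,
      hred, hsep⟩
    have hin : i ≤ n - 1 := hi2
    set j' : Fin (i + 1) := ⟨j - 1, by omega⟩ with hj'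
    set k' : Fin (i + 1) := ⟨k - 1, by omega⟩ with hk'
    have hyj : y (Fin.castLE (by omega : i + 1 ≤ n + 1) j') = 0 := by
      by_contra h
      exact hred ⟨Fin.castLE (by omega) j', by simp only [Fin.coe_castLE, hj']; omega, h⟩
    have hti' : (⟨i + 1, by omega⟩ : Fin (n + 1)) = ti := by
      apply Fin.ext; simp; omega
    have hck : (Fin.castLE (by omega) k' : Fin (n + 1)) = tk := by
      apply Fin.ext
      simp only [Fin.coe_castLE, hk']
      omega
    have hMR' := hMR i hi1 hi2 j' k'
    rw [hck, hyj, hti', zero_sub, mul_zero] at hMR'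
    -- hMR' : x i j' * -(y ti) * y tk = 0
    have hc := (hcomp i hi1 hi2 j' j').1
    have hjv : (j' : ℕ) + 1 = j := by simp [hj']; omega
    rw [hjv] at hc
    have hxj : x i j' ≠ 0 := fun h => (hc.mp h) hsep
    have : x i j' * -(y ti) * y tk ≠ 0 := by
      apply mul_ne_zero (mul_ne_zero hxj _) hyk
      simpa using hyi
    exact this hMR'
end
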